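/- arXiv:2202.10434 — 4 statements merged into one kernel-verified Lean document; each statement's English description precedes it below -/
import Mathlib

section
/- Let X and Y be nonempty sets and c : X × Y → [0,1]. If F is a uniformly bounded class of functions on X and F^c = {f^c : f ∈ F} is the class of its c-transforms, then for every ε > 0 the uniform-norm covering number satisfies N(ε, F^c, ‖·‖_∞) ≤ N(ε, F, ‖·‖_∞). -/
/-- The `c`-transform of a function `f : X → ℝ`: `f^c(y) = inf_{x ∈ X} (c(x,y) - f(x))`. -/
noncomputable def ctransform {X Y : Type*} (c : X → Y → ℝ) (f : X → ℝ) : Y → ℝ :=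
  fun y => ⨅ x, (c x y - f x)

/-- Uniform-norm covering number of a class of real-valued functions on `Z`. -/
noncomputable def covN {Z : Type*} (ε : ℝ) (G : Set (Z → ℝ)) : ℕ∞ :=
  sInf {n : ℕ∞ | ∃ s : Finset (Z → ℝ), (s.card : ℕ∞) = n ∧
    ∀ f ∈ G, ∃ g ∈ s, ∀ z, |f z - g z| ≤ ε}

lemma abs_ciInf_sub_ciInf {X : Type*} [Nonempty X] {φ ψ : X → ℝ} {ε : ℝ}
    (hφ : BddBelow (Set.range φ)) (hψ : BddBelow (Set.range ψ))
    (h : ∀ x, |φ x - ψ x| ≤ ε) : |(⨅ x, φ x) - ⨅ x, ψ x| ≤ ε := by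
  have h1 : (⨅ x, φ x) - ε ≤ ⨅ x, ψ x := by
    apply le_ciInf; intro x
    have := ciInf_le hφ x
    have := (abs_sub_le_iff.mp (h x)).1
    linarith
  have h2 : (⨅ x, ψ x) - ε ≤ ⨅ x, φ x := by
    apply le_ciInf; intro x
    have := ciInf_le hψ x
    have := (abs_sub_le_iff.mp (h x)).2
    linarith
  rw [abs_sub_le_iff]; constructor <;> linarith

/-- Complexity under c-transformation: `N(ε, F^c, ‖·‖_∞) ≤ N(ε, F, ‖·‖_∞)` for a
uniformly bounded class `F` and a cost `c : X × Y → [0,1]`. -/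
theorem covN_ctransform_le {X Y : Type*} [Nonempty X] [Nonempty Y]
    (c : X → Y → ℝ) (hc : ∀ x y, c x y ∈ Set.Icc (0 : ℝ) 1)
    (F : Set (X → ℝ)) (hF : ∃ M : ℝ, ∀ f ∈ F, ∀ x, |f x| ≤ M)
    (ε : ℝ) (hε : 0 < ε) :
    covN ε ((fun f => ctransform c f) '' F) ≤ covN ε F := by
  classical
  obtain ⟨M, hM⟩ := hF
  apply le_sInf
  rintro n ⟨s, hcard, hcov⟩
  have hmem : ((s.image (ctransform c)).card : ℕ∞) ∈
      {n : ℕ∞ | ∃ t : Finset (Y → ℝ), (t.card : ℕ∞) = n ∧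
        ∀ f ∈ ((fun f => ctransform c f) '' F), ∃ g ∈ t, ∀ z, |f z - g z| ≤ ε} := by
    refine ⟨s.image (ctransform c), rfl, ?_⟩
    rintro _ ⟨f, hf, rfl⟩
    obtain ⟨g, hg, hfg⟩ := hcov f hf
    refine ⟨ctransform c g, Finset.mem_image_of_mem _ hg, fun y => ?_⟩
    have hbf : BddBelow (Set.range (fun x => c x y - f x)) := by
      refine ⟨-M, ?_⟩
      rintro _ ⟨x, rfl⟩
      have := (hc x y).1
      have := (abs_le.mp (hM f hf x)).2
      simp only; linarith
    have hbg : BddBelow (Set.range (fun x => c x y - g x)) := by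
      refine ⟨-(M + ε), ?_⟩
      rintro _ ⟨x, rfl⟩
      have h1 := (hc x y).1
      have h2 := (abs_le.mp (hM f hf x)).2
      have h3 := (abs_le.mp (hfg x)).1
      simp only; linarith
    exact abs_ciInf_sub_ciInf hbf hbg (fun x => by
      have := hfg x
      rw [abs_sub_le_iff] at this ⊢
      constructor <;> linarith [this.1, this.2])
  calc covN ε ((fun f => ctransform c f) '' F) ≤ _ := sInf_le hmem
    _ ≤ n := by
        rw [← hcard]
        exact_mod_cast Finset.card_image_le
end

section
/- Let X and Y be nonempty sets and c : X × Y → [0,1]. If every f in a bounded function class F on X satisfies f = f^{cc} (double c-transform), then for every ε > 0 the uniform covering numbers of F and F^c coincide: N(ε, F^c, ‖·‖_∞) = N(ε, F, ‖·‖_∞). -/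
/-- The `c`-transform of `g : Y → ℝ`: `g^c(x) = inf_{y ∈ Y} (c(x,y) - g(y))`. -/
noncomputable def ctransform' {X Y : Type*} (c : X → Y → ℝ) (g : Y → ℝ) : X → ℝ :=
  fun x => ⨅ y, (c x y - g y)

lemma abs_ciInf_sub_ciInf_le {A : Type*} [Nonempty A] (u v : A → ℝ)
    (hu : BddBelow (Set.range u)) (hv : BddBelow (Set.range v)) {ε : ℝ}
    (h : ∀ a, |u a - v a| ≤ ε) : |(⨅ a, u a) - (⨅ a, v a)| ≤ ε := by
  rw [abs_sub_le_iff]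
  constructor
  · rw [sub_le_comm]
    refine le_ciInf fun a => ?_
    have h1 := ciInf_le hu a
    have h2 := abs_le.1 (h a)
    linarith [h2.1, h2.2]
  · rw [sub_le_comm]
    refine le_ciInf fun a => ?_
    have h1 := ciInf_le hv a
    have h2 := abs_le.1 (h a)
    linarith [h2.1, h2.2]

lemma covN_le_of_map {Z W : Type*} (ε : ℝ) (G : Set (Z → ℝ)) (H : Set (W → ℝ))
    (key : ∀ s : Finset (Z → ℝ), (∀ f ∈ G, ∃ g ∈ s, ∀ z, |f z - g z| ≤ ε) →
      ∃ t : Finset (W → ℝ), t.card ≤ s.card ∧ ∀ f ∈ H, ∃ g ∈ t, ∀ w, |f w - g w| ≤ ε) :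
    covN ε H ≤ covN ε G := by
  refine le_sInf fun n hn => ?_
  obtain ⟨s, hcard, hcover⟩ := hn
  obtain ⟨t, hle, hcov⟩ := key s hcover
  calc covN ε H ≤ (t.card : ℕ∞) := sInf_le ⟨t, rfl, hcov⟩
    _ ≤ (s.card : ℕ∞) := by exact_mod_cast hle
    _ = n := hcard

/-- If every `f ∈ F` satisfies `f = f^{cc}`, then `F` and `F^c` have identical
uniform metric entropies: `N(ε, F^c, ‖·‖_∞) = N(ε, F, ‖·‖_∞)`. -/
theorem covN_ctransform_eq {X Y : Type*} [Nonempty X] [Nonempty Y]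
    (c : X → Y → ℝ) (hc : ∀ x y, c x y ∈ Set.Icc (0 : ℝ) 1)
    (F : Set (X → ℝ)) (hF : ∃ M : ℝ, ∀ f ∈ F, ∀ x, |f x| ≤ M)
    (hcc : ∀ f ∈ F, ctransform' c (ctransform c f) = f)
    (ε : ℝ) (hε : 0 < ε) :
    covN ε ((fun f => ctransform c f) '' F) = covN ε F := by
  classical
  obtain ⟨M, hM⟩ := hF
  -- lower bound for c x y - f x when f ∈ F
  have hbf : ∀ f ∈ F, ∀ y : Y, BddBelow (Set.range fun x => c x y - f x) := by
    intro f hf y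
    refine ⟨-M, ?_⟩
    rintro r ⟨x, rfl⟩
    have h1 := (hc x y).1
    have h2 := abs_le.1 (hM f hf x)
    simp only
    linarith [h2.1, h2.2]
  -- upper bound on the c-transform of f ∈ F
  have hub : ∀ f ∈ F, ∀ y : Y, ctransform c f y ≤ 1 + M := by
    intro f hf y
    obtain ⟨x0⟩ : Nonempty X := inferInstance
    have h1 := ciInf_le (hbf f hf y) x0
    have h2 := (hc x0 y).2
    have h3 := abs_le.1 (hM f hf x0)
    calc ctransform c f y ≤ c x0 y - f x0 := h1
      _ ≤ 1 + M := by linarith [h3.1]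
  refine le_antisymm ?_ ?_
  · -- covN (F^c) ≤ covN F
    refine covN_le_of_map ε F _ fun s hs => ?_
    set s' := s.filter (fun g => ∃ f ∈ F, ∀ x, |f x - g x| ≤ ε) with hs'
    refine ⟨s'.image (fun g => ctransform c g), le_trans (Finset.card_image_le) ?_, ?_⟩
    · exact Finset.card_filter_le _ _
    · rintro h ⟨f, hf, rfl⟩
      obtain ⟨g, hg, hgf⟩ := hs f hf
      have hg' : g ∈ s' := Finset.mem_filter.2 ⟨hg, f, hf, hgf⟩
      refine ⟨ctransform c g, Finset.mem_image_of_mem _ hg', fun y => ?_⟩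
      refine abs_ciInf_sub_ciInf_le _ _ (hbf f hf y) ?_ ?_
      · refine ⟨-(M + ε), ?_⟩
        rintro r ⟨x, rfl⟩
        have h1 := (hc x y).1
        have h2 := abs_le.1 (hM f hf x)
        have h3 := abs_le.1 (hgf x)
        simp only
        linarith [h2.1, h3.1, h3.2]
      · intro x
        have h3 := abs_le.1 (hgf x)
        rw [abs_le]
        constructor <;> · linarith [h3.1, h3.2]
  · -- covN F ≤ covN (F^c)
    refine covN_le_of_map ε _ F fun s hs => ?_
    set s' := s.filter (fun g => ∃ f ∈ F, ∀ y, |ctransform c f y - g y| ≤ ε) with hs'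
    refine ⟨s'.image (fun g => ctransform' c g), le_trans (Finset.card_image_le) ?_, ?_⟩
    · exact Finset.card_filter_le _ _
    · intro f hf
      obtain ⟨g, hg, hgf⟩ := hs (ctransform c f) ⟨f, hf, rfl⟩
      have hg' : g ∈ s' := Finset.mem_filter.2 ⟨hg, f, hf, hgf⟩
      refine ⟨ctransform' c g, Finset.mem_image_of_mem _ hg', fun x => ?_⟩
      have hfx : f x = ctransform' c (ctransform c f) x := by rw [hcc f hf]
      rw [hfx]
      refine abs_ciInf_sub_ciInf_le _ _ ?_ ?_ ?_
      · refine ⟨-(1 + M), ?_⟩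
        rintro r ⟨y, rfl⟩
        have h1 := (hc x y).1
        have h2 := hub f hf y
        simp only
        linarith
      · refine ⟨-(1 + M + ε), ?_⟩
        rintro r ⟨y, rfl⟩
        have h1 := (hc x y).1
        have h2 := hub f hf y
        have h3 := abs_le.1 (hgf y)
        simp only
        linarith [h3.1, h3.2]
      · intro y
        have h3 := abs_le.1 (hgf y)
        rw [abs_le]
        constructor <;> · linarith [h3.1, h3.2]
end

section
/- Let X be a Polish space, Y = Y_1 × Y_2 a product of Polish spaces, and c(x,(y_1,y_2)) = c_1(x,y_1) + c_2(y_2) a continuous cost with c_1 : X × Y_1 → [0,1] and c_2 : Y_2 → [0,1] continuous. Then for all probability measures μ on X and ν on Y, the optimal transport cost decomposes as T_c(μ, ν) = T_{c_1}(μ, p_#ν) + ∫ c_2(y_2) dν(y_1, y_2), where p : Y → Y_1 is the projection onto the first factor. -/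
open MeasureTheory ProbabilityTheory
open scoped ProbabilityTheory

/-- The optimal transport cost `T_k(α, β)`: the infimum of `∫ k dπ` over all couplings
`π` of `α` and `β` (probability measures on the product with the given marginals). -/
noncomputable def OTcost {A B : Type*} [MeasurableSpace A] [MeasurableSpace B]
    (k : A × B → ℝ) (α : Measure A) (β : Measure B) : ℝ :=
  sInf {r : ℝ | ∃ π : Measure (A × B), IsProbabilityMeasure π ∧
    π.map Prod.fst = α ∧ π.map Prod.snd = β ∧ r = ∫ z, k z ∂π}

/-- Bounded a.e. strongly measurable functions are integrable on finite measures. -/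
lemma integrable_of_abs_le_two {α : Type*} [MeasurableSpace α] {μ : Measure α}
    [IsFiniteMeasure μ] {f : α → ℝ} (hf : AEStronglyMeasurable f μ)
    (h : ∀ x, |f x| ≤ 2) : Integrable f μ :=
  (integrable_const (2 : ℝ)).mono' hf
    (Filter.Eventually.of_forall fun x => by simpa [Real.norm_eq_abs] using h x)

/-- Decomposition of OT under additive costs: for `c(x,(y₁,y₂)) = c₁(x,y₁) + c₂(y₂)`,
`T_c(μ, ν) = T_{c₁}(μ, p_#ν) + ∫ c₂(y₂) dν(y₁,y₂)` where `p` is the projection onto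
the first factor. -/
theorem OTcost_additive_decomposition
    {X Y₁ Y₂ : Type*}
    [MeasurableSpace X] [TopologicalSpace X] [PolishSpace X] [BorelSpace X]
    [MeasurableSpace Y₁] [TopologicalSpace Y₁] [PolishSpace Y₁] [BorelSpace Y₁]
    [MeasurableSpace Y₂] [TopologicalSpace Y₂] [PolishSpace Y₂] [BorelSpace Y₂]
    (c₁ : X × Y₁ → ℝ) (hc₁cont : Continuous c₁)
    (hc₁ : ∀ z, c₁ z ∈ Set.Icc (0 : ℝ) 1)
    (c₂ : Y₂ → ℝ) (hc₂cont : Continuous c₂)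
    (hc₂ : ∀ y₂, c₂ y₂ ∈ Set.Icc (0 : ℝ) 1)
    (μ : Measure X) (ν : Measure (Y₁ × Y₂))
    [IsProbabilityMeasure μ] [IsProbabilityMeasure ν] :
    OTcost (fun z : X × (Y₁ × Y₂) => c₁ (z.1, z.2.1) + c₂ z.2.2) μ ν
      = OTcost c₁ μ (ν.map Prod.fst) + ∫ y, c₂ y.2 ∂ν := by
  classical
  set c : X × (Y₁ × Y₂) → ℝ := fun z => c₁ (z.1, z.2.1) + c₂ z.2.2 with hc
  set C : ℝ := ∫ y, c₂ y.2 ∂ν with hCdef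
  set S : Set ℝ := {r : ℝ | ∃ π : Measure (X × (Y₁ × Y₂)), IsProbabilityMeasure π ∧
    π.map Prod.fst = μ ∧ π.map Prod.snd = ν ∧ r = ∫ z, c z ∂π} with hS
  set S₁ : Set ℝ := {r : ℝ | ∃ π : Measure (X × Y₁), IsProbabilityMeasure π ∧
    π.map Prod.fst = μ ∧ π.map Prod.snd = ν.map Prod.fst ∧ r = ∫ z, c₁ z ∂π} with hS₁
  -- basic measurability facts
  have hccont : Continuous c := by
    apply Continuous.add
    · exact hc₁cont.comp (continuous_fst.prodMk (continuous_fst.comp continuous_snd))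
    · exact hc₂cont.comp (continuous_snd.comp continuous_snd)
  have hcbd : ∀ z, |c z| ≤ 2 := by
    intro z
    have h1 := hc₁ (z.1, z.2.1); have h2 := hc₂ z.2.2
    have hz : c z = c₁ (z.1, z.2.1) + c₂ z.2.2 := rfl
    rw [hz, abs_of_nonneg (by linarith [h1.1, h2.1])]
    linarith [h1.2, h2.2]
  have hc₁bd : ∀ z, |c₁ z| ≤ 2 := fun z => by
    have := hc₁ z; rw [abs_of_nonneg this.1]; linarith [this.2]
  have hc₂bd : ∀ y, |c₂ y| ≤ 2 := fun y => by
    have := hc₂ y; rw [abs_of_nonneg this.1]; linarith [this.2]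
  -- The key set identity
  have key : S = (fun r => r + C) '' S₁ := by
    apply Set.Subset.antisymm
    · rintro r ⟨π, hπ, hπ1, hπ2, rfl⟩
      haveI := hπ
      set g : X × (Y₁ × Y₂) → X × Y₁ := fun z => (z.1, z.2.1) with hg
      have hgm : Measurable g := measurable_fst.prodMk (measurable_fst.comp measurable_snd)
      set π₁ : Measure (X × Y₁) := π.map g with hπ₁def
      haveI : IsProbabilityMeasure π₁ := Measure.isProbabilityMeasure_map hgm.aemeasurable
      refine ⟨∫ z, c₁ z ∂π₁, ⟨π₁, inferInstance, ?_, ?_, rfl⟩, ?_⟩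
      · rw [hπ₁def, Measure.map_map measurable_fst hgm]
        exact hπ1
      · rw [hπ₁def, Measure.map_map measurable_snd hgm]
        have : (Prod.snd ∘ g : X × (Y₁ × Y₂) → Y₁) = Prod.fst ∘ Prod.snd := rfl
        rw [this, ← Measure.map_map measurable_fst measurable_snd, hπ2]
      · -- value identity
        have hgc : Continuous g :=
          continuous_fst.prodMk (continuous_fst.comp continuous_snd)
        have hint1 : Integrable (fun z => c₁ (g z)) π :=
          integrable_of_abs_le_two (hc₁cont.comp hgc).aestronglyMeasurable (fun z => hc₁bd _)
        have hint2 : Integrable (fun z : X × (Y₁ × Y₂) => c₂ z.2.2) π :=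
          integrable_of_abs_le_two
            ((hc₂cont.comp (continuous_snd.comp continuous_snd)).aestronglyMeasurable)
            (fun z => hc₂bd _)
        have hsplit : ∫ z, c z ∂π = (∫ z, c₁ (g z) ∂π) + ∫ z, c₂ z.2.2 ∂π :=
          integral_add hint1 hint2
        have e1 : ∫ z, c₁ (g z) ∂π = ∫ w, c₁ w ∂π₁ := by
          rw [hπ₁def, integral_map hgm.aemeasurable hc₁cont.aestronglyMeasurable]
        have e2 : ∫ z, c₂ z.2.2 ∂π = C := by
          have : ∫ y, c₂ y.2 ∂(π.map Prod.snd)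
              = ∫ z, c₂ (Prod.snd z).2 ∂π :=
            integral_map measurable_snd.aemeasurable
              (hc₂cont.comp continuous_snd).aestronglyMeasurable
          rw [hπ2] at this
          rw [hCdef, this]
        rw [hsplit, e1, e2]
    · rintro r ⟨s, ⟨π₁, hπ₁, h1, h2, rfl⟩, rfl⟩
      haveI := hπ₁
      haveI : Nonempty (Y₁ × Y₂) := Measure.nonempty_of_neZero ν
      haveI : Nonempty Y₂ := Nonempty.map Prod.snd ‹Nonempty (Y₁ × Y₂)›
      have hνfst : ν.fst = ν.map Prod.fst := rfl
      set κ : ProbabilityTheory.Kernel (X × Y₁) Y₂ :=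
        ν.condKernel.comap Prod.snd measurable_snd with hκdef
      have hκap : ∀ a, κ a = ν.condKernel a.2 := fun a => rfl
      set π' : Measure ((X × Y₁) × Y₂) := Measure.compProd π₁ κ with hπ'def
      haveI : IsProbabilityMeasure π' := by
        constructor
        rw [hπ'def, Measure.compProd_apply_univ]
        exact measure_univ
      set e : (X × Y₁) × Y₂ ≃ᵐ X × (Y₁ × Y₂) := MeasurableEquiv.prodAssoc with hedef
      set π : Measure (X × (Y₁ × Y₂)) := π'.map e with hπdef
      haveI : IsProbabilityMeasure π := Measure.isProbabilityMeasure_map e.measurable.aemeasurable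
      have hfst : π'.map Prod.fst = π₁ := Measure.fst_compProd π₁ κ
      refine ⟨π, inferInstance, ?_, ?_, ?_⟩
      · rw [hπdef, Measure.map_map measurable_fst e.measurable]
        have : (Prod.fst ∘ e : (X × Y₁) × Y₂ → X) = Prod.fst ∘ Prod.fst := rfl
        rw [this, ← Measure.map_map measurable_fst measurable_fst, hfst, h1]
      · -- second marginal is ν
        set m : (X × Y₁) × Y₂ → Y₁ × Y₂ := fun p => (p.1.2, p.2) with hmdef
        have hmm : Measurable m := (measurable_snd.comp measurable_fst).prodMk measurable_snd
        have hstep : π.map Prod.snd = π'.map m := by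
          rw [hπdef, Measure.map_map measurable_snd e.measurable]
          rfl
        rw [hstep]
        refine ext_of_generate_finite _ generateFrom_prod.symm isPiSystem_prod ?_ ?_
        · rintro u ⟨s, hs, t, ht, rfl⟩
          simp only [Set.mem_setOf_eq] at hs ht
          have hpre : m ⁻¹' (s ×ˢ t) = (Set.univ ×ˢ s) ×ˢ t := by
            ext ⟨⟨x, y₁⟩, y₂⟩
            simp [hmdef, Set.mem_prod]
          have hpre2 : (Prod.snd : X × Y₁ → Y₁) ⁻¹' s = Set.univ ×ˢ s := by
            ext ⟨x, y₁⟩; simp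
          rw [Measure.map_apply hmm (hs.prod ht), hpre,
            Measure.compProd_apply_prod (MeasurableSet.univ.prod hs) ht]
          have hfun : ∀ a : X × Y₁, κ a t = ν.condKernel a.2 t := fun a => rfl
          calc ∫⁻ a in Set.univ ×ˢ s, κ a t ∂π₁
              = ∫⁻ a in (Prod.snd : X × Y₁ → Y₁) ⁻¹' s, ν.condKernel a.2 t ∂π₁ := by
                rw [hpre2]; rfl
            _ = ∫⁻ y₁ in s, ν.condKernel y₁ t ∂(π₁.map Prod.snd) :=
                (setLIntegral_map hs (ProbabilityTheory.Kernel.measurable_coe ν.condKernel ht)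
                  measurable_snd).symm
            _ = ∫⁻ y₁ in s, ν.condKernel y₁ t ∂ν.fst := by rw [h2, hνfst]
            _ = (ν.fst ⊗ₘ ν.condKernel) (s ×ˢ t) :=
                (Measure.compProd_apply_prod hs ht).symm
            _ = ν (s ×ˢ t) := by rw [ν.disintegrate ν.condKernel]
        · haveI : IsProbabilityMeasure (π'.map m) :=
            Measure.isProbabilityMeasure_map hmm.aemeasurable
          simp [measure_univ]
      · -- value identity
        have hce : ∀ p : (X × Y₁) × Y₂, c (e p) = c₁ p.1 + c₂ p.2 := fun p => rfl
        have hintf : Integrable (fun p : (X × Y₁) × Y₂ => c₁ p.1 + c₂ p.2) π' := by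
          refine integrable_of_abs_le_two ?_ ?_
          · exact ((hc₁cont.comp continuous_fst).add
              (hc₂cont.comp continuous_snd)).aestronglyMeasurable
          · intro p
            have h1 := hc₁ p.1; have h2 := hc₂ p.2
            rw [abs_of_nonneg (by linarith [h1.1, h2.1])]
            linarith [h1.2, h2.2]
        have hval : ∫ z, c z ∂π = ∫ p, c₁ p.1 + c₂ p.2 ∂π' := by
          rw [hπdef, integral_map_equiv]
          exact integral_congr_ae (Filter.Eventually.of_forall hce)
        have hG : StronglyMeasurable fun y₁ => ∫ b, c₂ b ∂(ν.condKernel y₁) :=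
          StronglyMeasurable.integral_kernel_prod_right
            (f := fun (_ : Y₁) b => c₂ b)
            (hc₂cont.stronglyMeasurable.comp_measurable measurable_snd)
        have hGbd : ∀ y₁, |∫ b, c₂ b ∂(ν.condKernel y₁)| ≤ 2 := by
          intro y₁
          haveI : IsProbabilityMeasure (ν.condKernel y₁) :=
            ProbabilityTheory.IsMarkovKernel.isProbabilityMeasure y₁
          have h := norm_integral_le_of_norm_le_const (μ := ν.condKernel y₁) (C := 2)
            (f := c₂) (Filter.Eventually.of_forall fun b => by
              simpa [Real.norm_eq_abs] using hc₂bd b)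
          simpa [Real.norm_eq_abs] using h
        have hinner : ∀ a : X × Y₁,
            ∫ b, c₁ a + c₂ b ∂(κ a) = c₁ a + ∫ b, c₂ b ∂(ν.condKernel a.2) := by
          intro a
          haveI : IsProbabilityMeasure (κ a) := IsMarkovKernel.isProbabilityMeasure a
          rw [integral_add (integrable_const _)
            (integrable_of_abs_le_two hc₂cont.aestronglyMeasurable fun b => hc₂bd b)]
          simp [hκap a]
        have hsteps : ∫ p, c₁ p.1 + c₂ p.2 ∂π'
            = (∫ w, c₁ w ∂π₁) + ∫ a : X × Y₁, (∫ b, c₂ b ∂(ν.condKernel a.2)) ∂π₁ := by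
          rw [hπ'def, Measure.integral_compProd hintf]
          have : ∀ a : X × Y₁, ∫ b, c₁ a + c₂ b ∂(κ a)
              = c₁ a + ∫ b, c₂ b ∂(ν.condKernel a.2) := hinner
          rw [integral_congr_ae (Filter.Eventually.of_forall this)]
          exact integral_add
            (integrable_of_abs_le_two hc₁cont.aestronglyMeasurable fun w => hc₁bd w)
            (integrable_of_abs_le_two
              ((hG.comp_measurable measurable_snd).aestronglyMeasurable)
              fun a => hGbd a.2)
        have hlast : ∫ a : X × Y₁, (∫ b, c₂ b ∂(ν.condKernel a.2)) ∂π₁ = C := by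
          have hmap2 : ∫ a : X × Y₁, (∫ b, c₂ b ∂(ν.condKernel a.2)) ∂π₁
              = ∫ y₁, (∫ b, c₂ b ∂(ν.condKernel y₁)) ∂(π₁.map Prod.snd) :=
            (integral_map measurable_snd.aemeasurable
              (hG.aestronglyMeasurable)).symm
          rw [hmap2, h2, ← hνfst, hCdef]
          have hdis : ν = ν.fst ⊗ₘ ν.condKernel := (ν.disintegrate ν.condKernel).symm
          have hint2 : Integrable (fun y : Y₁ × Y₂ => c₂ y.2) (ν.fst ⊗ₘ ν.condKernel) := by
            refine integrable_of_abs_le_two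
              ((hc₂cont.comp continuous_snd).aestronglyMeasurable) fun y => hc₂bd y.2
          conv_rhs => rw [hdis]
          rw [Measure.integral_compProd hint2]
        rw [hval, hsteps, hlast]
  have hS₁ne : S₁.Nonempty := by
    haveI : IsProbabilityMeasure (ν.map (Prod.fst : Y₁ × Y₂ → Y₁)) :=
      Measure.isProbabilityMeasure_map measurable_fst.aemeasurable
    exact ⟨∫ z, c₁ z ∂(μ.prod (ν.map Prod.fst)),
      μ.prod (ν.map Prod.fst), inferInstance, Measure.fst_prod, Measure.snd_prod, rfl⟩
  have hS₁bdd : BddBelow S₁ := by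
    refine ⟨0, ?_⟩
    rintro r ⟨π, hπ, _, _, rfl⟩
    exact integral_nonneg fun z => (hc₁ z).1
  have : OTcost c μ ν = sInf S := rfl
  rw [show OTcost c μ ν = sInf S from rfl] at *
  have hmap : sInf S = sInf S₁ + C := by
    rw [key]
    exact (Monotone.map_csInf_of_continuousAt (f := fun r => r + C)
      (continuous_add_right C).continuousAt (fun a b hab => by simpa using hab)
      hS₁ne hS₁bdd).symm
  exact hmap
end

section
/- Let X = Y_1 and Y = Y_1 × Y_2 with cost c(x, (y_1,y_2)) = c_1(x, y_1) + c_2(y_2), where c_1 is nonnegative with c_1(y_1, y_1) = 0 for all y_1 ∈ Y_1 and c_2 : Y_2 → [0,1]. If μ = p_#ν and μ̂_n = p_#ν̂_n for the projection p(y_1, y_2) = y_1, then T_c(μ̂_n, ν̂_n) − T_c(μ, ν) = ∫ c_2 d(ν̂_n − ν), i.e., the OT estimation error reduces exactly to the error of a linear functional. -/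
open MeasureTheory

lemma integrable_of_bounded_cont {A : Type*} [MeasurableSpace A] [TopologicalSpace A]
    [OpensMeasurableSpace A] (f : A → ℝ) (hf : Continuous f) (C : ℝ)
    (hb : ∀ a, |f a| ≤ C) (π : Measure A) [IsProbabilityMeasure π] : Integrable f π :=
  (integrable_const C).mono' hf.aestronglyMeasurable (Filter.Eventually.of_forall hb)

lemma OTcost_self {Y₁ Y₂ : Type*}
    [MeasurableSpace Y₁] [TopologicalSpace Y₁] [PolishSpace Y₁] [BorelSpace Y₁]
    [MeasurableSpace Y₂] [TopologicalSpace Y₂] [PolishSpace Y₂] [BorelSpace Y₂]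
    (c₁ : Y₁ × Y₁ → ℝ) (hc₁cont : Continuous c₁)
    (hc₁ : ∀ z, c₁ z ∈ Set.Icc (0 : ℝ) 1)
    (hc₁diag : ∀ y₁ : Y₁, c₁ (y₁, y₁) = 0)
    (c₂ : Y₂ → ℝ) (hc₂cont : Continuous c₂)
    (hc₂ : ∀ y₂, c₂ y₂ ∈ Set.Icc (0 : ℝ) 1)
    (β : Measure (Y₁ × Y₂)) [IsProbabilityMeasure β] :
    OTcost (fun z : Y₁ × (Y₁ × Y₂) => c₁ (z.1, z.2.1) + c₂ z.2.2) (β.map Prod.fst) β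
      = ∫ y, c₂ y.2 ∂β := by
  set c : Y₁ × (Y₁ × Y₂) → ℝ := fun z => c₁ (z.1, z.2.1) + c₂ z.2.2 with hc
  have hccont : Continuous c := by
    apply Continuous.add
    · exact hc₁cont.comp (continuous_fst.prodMk (continuous_fst.comp continuous_snd))
    · exact hc₂cont.comp (continuous_snd.comp continuous_snd)
  have hT : Measurable (fun y : Y₁ × Y₂ => (y.1, y)) := measurable_fst.prodMk measurable_id
  set π₀ : Measure (Y₁ × (Y₁ × Y₂)) := β.map (fun y => (y.1, y)) with hπ₀
  have hπ₀prob : IsProbabilityMeasure π₀ := Measure.isProbabilityMeasure_map hT.aemeasurable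
  have hmem : (∫ y, c₂ y.2 ∂β) ∈ {r : ℝ | ∃ π : Measure (Y₁ × (Y₁ × Y₂)),
      IsProbabilityMeasure π ∧ π.map Prod.fst = β.map Prod.fst ∧ π.map Prod.snd = β ∧
      r = ∫ z, c z ∂π} := by
    refine ⟨π₀, hπ₀prob, ?_, ?_, ?_⟩
    · rw [hπ₀, Measure.map_map measurable_fst hT]
      rfl
    · rw [hπ₀, Measure.map_map measurable_snd hT]
      exact Measure.map_id
    · rw [hπ₀, integral_map hT.aemeasurable hccont.aestronglyMeasurable]
      simp [hc, hc₁diag]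
  have hlb : ∀ r ∈ {r : ℝ | ∃ π : Measure (Y₁ × (Y₁ × Y₂)),
      IsProbabilityMeasure π ∧ π.map Prod.fst = β.map Prod.fst ∧ π.map Prod.snd = β ∧
      r = ∫ z, c z ∂π}, (∫ y, c₂ y.2 ∂β) ≤ r := by
    rintro r ⟨π, hπprob, -, hπ2, rfl⟩
    have h2 : ∫ z : Y₁ × (Y₁ × Y₂), c₂ z.2.2 ∂π = ∫ y, c₂ y.2 ∂β := by
      rw [← hπ2]
      exact (integral_map measurable_snd.aemeasurable
        ((hc₂cont.comp continuous_snd).aestronglyMeasurable)).symm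
    rw [← h2]
    apply integral_mono
    · exact integrable_of_bounded_cont (fun z : Y₁ × (Y₁ × Y₂) => c₂ z.2.2)
        (hc₂cont.comp (continuous_snd.comp continuous_snd)) 1
        (fun z => abs_le.2 ⟨by linarith [(hc₂ z.2.2).1], (hc₂ z.2.2).2⟩) π
    · exact integrable_of_bounded_cont c hccont 2
        (fun z => abs_le.2 ⟨by simp only [hc]; linarith [(hc₁ (z.1, z.2.1)).1, (hc₂ z.2.2).1],
          by simp only [hc]; linarith [(hc₁ (z.1, z.2.1)).2, (hc₂ z.2.2).2]⟩) π
    · intro z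
      simp only [hc]
      linarith [(hc₁ (z.1, z.2.1)).1]
  exact le_antisymm (csInf_le ⟨_, hlb⟩ hmem) (le_csInf ⟨_, hmem⟩ hlb)

/-- Dependent empirical measures: with `X = Y₁`, cost
`c(x,(y₁,y₂)) = c₁(x,y₁) + c₂(y₂)` where `c₁ ≥ 0` vanishes on the diagonal, if
`μ = p_#ν` and `μ̂ₙ = p_#ν̂ₙ` for the projection `p(y₁,y₂) = y₁`, then
`T_c(μ̂ₙ, ν̂ₙ) − T_c(μ, ν) = ∫ c₂ d(ν̂ₙ − ν)`. -/
theorem OTcost_dependent_reduces_to_linear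
    {Y₁ Y₂ : Type*}
    [MeasurableSpace Y₁] [TopologicalSpace Y₁] [PolishSpace Y₁] [BorelSpace Y₁]
    [MeasurableSpace Y₂] [TopologicalSpace Y₂] [PolishSpace Y₂] [BorelSpace Y₂]
    (c₁ : Y₁ × Y₁ → ℝ) (hc₁cont : Continuous c₁)
    (hc₁ : ∀ z, c₁ z ∈ Set.Icc (0 : ℝ) 1)
    (hc₁diag : ∀ y₁ : Y₁, c₁ (y₁, y₁) = 0)
    (c₂ : Y₂ → ℝ) (hc₂cont : Continuous c₂)
    (hc₂ : ∀ y₂, c₂ y₂ ∈ Set.Icc (0 : ℝ) 1)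
    (ν νn : Measure (Y₁ × Y₂)) [IsProbabilityMeasure ν] [IsProbabilityMeasure νn] :
    OTcost (fun z : Y₁ × (Y₁ × Y₂) => c₁ (z.1, z.2.1) + c₂ z.2.2)
        (νn.map Prod.fst) νn
      - OTcost (fun z : Y₁ × (Y₁ × Y₂) => c₁ (z.1, z.2.1) + c₂ z.2.2)
        (ν.map Prod.fst) ν
      = (∫ y, c₂ y.2 ∂νn) - ∫ y, c₂ y.2 ∂ν := by
  rw [OTcost_self c₁ hc₁cont hc₁ hc₁diag c₂ hc₂cont hc₂ νn,
    OTcost_self c₁ hc₁cont hc₁ hc₁diag c₂ hc₂cont hc₂ ν]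
end
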